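/- Let V : ℝ → ℝ be bounded and continuous, E real, a > 0, and let u solve −u″ + Vu = Eu on [0,a] with u(0) = 0, u′(0) = 1. Let θ : [0,a] → ℝ be a continuous function with θ(0) = 0 such that for every x ∈ [0,a], (u′(x), u(x)) = r(x)(cos θ(x), sin θ(x)) where r(x) = √(u(x)² + u′(x)²) > 0. If u has exactly m zeros in the open interval (0,a), then θ(a) ∈ (mπ, (m+1)π]; moreover θ(a) = (m+1)π exactly when u(a) = 0. -/

import Mathlib

/-!
At a zero of `u` the Prüfer angle has derivative `(u'² - u u'') / r² = 1`, so `θ` can cross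
each level `kπ` only upwards. As the zeros of `u` are the points where `θ ∈ πℤ`, the zeros in
`(0, a)` are in bijection with the integers `k ≥ 1` such that `kπ < θ a`, and counting those
pins `θ a` in `(mπ, (m + 1)π]`.
-/

open Set Real Filter Topology

section LevelCrossing

variable {f : ℝ → ℝ} {f' x : ℝ}

lemma HasDerivWithinAt.eventually_lt_nhdsGT (hf : HasDerivWithinAt f f' (Ioi x) x)
    (hf' : 0 < f') : ∀ᶠ y in 𝓝[>] x, f x < f y := by
  filter_upwards [((hasDerivWithinAt_iff_tendsto_slope' self_notMem_Ioi).mp hf).eventually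
    (eventually_gt_nhds hf'), self_mem_nhdsWithin] with y hslope hy
  exact (slope_pos_iff hy).mp hslope

lemma HasDerivWithinAt.eventually_gt_nhdsLT (hf : HasDerivWithinAt f f' (Iio x) x)
    (hf' : 0 < f') : ∀ᶠ y in 𝓝[<] x, f y < f x := by
  filter_upwards [((hasDerivWithinAt_iff_tendsto_slope' self_notMem_Iio).mp hf).eventually
    (eventually_gt_nhds hf'), self_mem_nhdsWithin] with y hslope hy
  exact (slope_pos_iff_gt hy).mp hslope

lemma ContinuousOn.lt_of_le_of_hasDerivWithinAt_pos {a b c x₁ x₂ : ℝ}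
    (hf : ContinuousOn f (Icc a b))
    (hup : ∀ x ∈ Icc a b, f x = c → ∃ f' > 0, HasDerivWithinAt f f' (Icc a b) x)
    (hx₁ : x₁ ∈ Icc a b) (hx₂ : x₂ ∈ Icc a b) (hlt : x₁ < x₂) (hc : c ≤ f x₁) :
    c < f x₂ := by
  have hsub : Icc x₁ x₂ ⊆ Icc a b := Icc_subset_Icc hx₁.1 hx₂.2
  have hge : Icc x₁ x₂ ⊆ {x | c ≤ f x} := by
    refine IsClosed.Icc_subset_of_forall_mem_nhdsWithin ?_ hc fun x ⟨(hcx : c ≤ f x), hx⟩ ↦ ?_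
    · rw [inter_comm]
      exact (hf.mono hsub).preimage_isClosed_of_isClosed isClosed_Icc isClosed_Ici
    have hxab : x ∈ Ico a b := ⟨hx₁.1.trans hx.1, hx.2.trans_le hx₂.2⟩
    rcases hcx.eq_or_lt with hcx | hcx
    · obtain ⟨f', hf', hd⟩ := hup x (Ico_subset_Icc_self hxab) hcx.symm
      filter_upwards [(hd.mono_of_mem_nhdsWithin
        (Icc_mem_nhdsGT_of_mem hxab)).eventually_lt_nhdsGT hf'] with y hy
      exact hcx.le.trans hy.le
    · have hcont := (hf x (Ico_subset_Icc_self hxab)).mono_of_mem_nhdsWithin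
        (Icc_mem_nhdsGT_of_mem hxab)
      exact hcont.eventually (eventually_ge_nhds hcx)
  rcases (show c ≤ f x₂ from hge (right_mem_Icc.mpr hlt.le)).eq_or_lt with hc₂ | hc₂
  · have hx₂' : x₂ ∈ Ioc a b := ⟨hx₁.1.trans_lt hlt, hx₂.2⟩
    obtain ⟨f', hf', hd⟩ := hup x₂ hx₂ hc₂.symm
    obtain ⟨y, hy, hyx⟩ := ((hd.mono_of_mem_nhdsWithin
      (Icc_mem_nhdsLT_of_mem hx₂')).eventually_gt_nhdsLT hf' |>.and (Ioo_mem_nhdsLT hlt)).exists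
    exact absurd (hge (Ioo_subset_Icc_self hyx)) (by simpa [← hc₂] using hy)
  · exact hc₂

end LevelCrossing

/-- Near a point where the curve `(q, p)` meets the horizontal axis, its continuous angle is
`θ x₀ + arctan (p / q)`. -/
lemma hasDerivWithinAt_angle_of_sin_eq_zero {p q θ : ℝ → ℝ} {p' q' x₀ : ℝ} {s : Set ℝ}
    (hp : HasDerivAt p p' x₀) (hq : HasDerivAt q q' x₀) (hθ : ContinuousWithinAt θ s x₀)
    (hpar : ∀ᶠ x in 𝓝[s] x₀, p x * cos (θ x) = q x * sin (θ x))
    (hp₀ : p x₀ = 0) (hq₀ : q x₀ ≠ 0) (hsin : sin (θ x₀) = 0) :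
    HasDerivWithinAt θ (p' / q x₀) s x₀ := by
  obtain ⟨k, hk⟩ := sin_eq_zero_iff.mp hsin
  have hnear : ∀ᶠ x in 𝓝[s] x₀, |θ x - θ x₀| < π / 2 :=
    hθ.eventually (Metric.ball_mem_nhds _ (by positivity))
  have hlocal : θ =ᶠ[𝓝[s] x₀] fun x ↦ θ x₀ + arctan (p x / q x) := by
    filter_upwards [hpar, hnear, nhdsWithin_le_nhds (hq.continuousAt.eventually_ne hq₀)]
      with x hpx hθx hqx
    have hcos : cos (θ x) ≠ 0 := by
      intro hc
      have : sin (θ x) = 0 := by simpa [hc, hqx] using hpx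
      simpa [this, hc] using sin_sq_add_cos_sq (θ x)
    have htan : p x / q x = tan (θ x - θ x₀) := by
      rw [← hk, tan_sub_int_mul_pi, tan_eq_sin_div_cos, div_eq_div_iff hqx hcos, hpx, mul_comm]
    rw [htan, arctan_tan (by linarith [neg_abs_le (θ x - θ x₀)]) (lt_of_abs_lt hθx)]
    ring
  have hderiv : HasDerivAt (fun x ↦ θ x₀ + arctan (p x / q x)) (p' / q x₀) x₀ :=
    (((hp.fun_div hq hq₀).arctan).const_add (θ x₀)).congr_deriv (by rw [hp₀]; field_simp; ring)
  exact hderiv.hasDerivWithinAt.congr_of_eventuallyEq hlocal (by simp [hp₀])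

lemma natFloor_div_pi_mul_pi {x : ℝ} (hsin : sin x = 0) (hx : 0 ≤ x) :
    (⌊x / π⌋₊ : ℝ) * π = x := by
  obtain ⟨k, rfl⟩ := sin_eq_zero_iff.mp hsin
  lift k to ℕ using by exact_mod_cast nonneg_of_mul_nonneg_left hx pi_pos
  simp [pi_ne_zero]

lemma ncard_nat_mul_pi_lt (x : ℝ) : {k : ℕ | 0 < k ∧ k * π < x}.ncard = ⌈x / π⌉₊ - 1 := by
  have : {k : ℕ | 0 < k ∧ k * π < x} = Finset.Ioo 0 ⌈x / π⌉₊ := by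
    ext k
    simp [Nat.lt_ceil, lt_div_iff₀ pi_pos]
  rw [this, ncard_coe_finset, Nat.card_Ioo, Nat.sub_zero]

lemma mem_Ioc_of_ceil_div_pi {x : ℝ} {m : ℕ} (hx : 0 < x) (hm : ⌈x / π⌉₊ - 1 = m) :
    x ∈ Ioc (m * π) ((m + 1) * π) := by
  have hceil : ⌈x / π⌉₊ = m + 1 := by
    have : 0 < ⌈x / π⌉₊ := Nat.ceil_pos.mpr (by positivity)
    omega
  obtain ⟨hlo, hhi⟩ := (Nat.ceil_eq_iff m.succ_ne_zero).mp hceil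
  push_cast at hlo hhi
  exact ⟨(lt_div_iff₀ pi_pos).mp (by simpa using hlo), (div_le_iff₀ pi_pos).mp hhi⟩

lemma sin_eq_zero_iff_of_mem_Ioc {x : ℝ} {m : ℕ} (hx : x ∈ Ioc (m * π) ((m + 1) * π)) :
    sin x = 0 ↔ x = (m + 1) * π := by
  refine ⟨fun hsin ↦ ?_, fun h ↦ by simpa [h] using sin_nat_mul_pi (m + 1)⟩
  obtain ⟨k, rfl⟩ := sin_eq_zero_iff.mp hsin
  have hlo : (m : ℝ) < k := lt_of_mul_lt_mul_right hx.1 pi_pos.le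
  have hhi : (k : ℝ) ≤ m + 1 := le_of_mul_le_mul_right hx.2 pi_pos
  have : k = m + 1 := by
    have : (m : ℤ) < k := by exact_mod_cast hlo
    have : k ≤ (m : ℤ) + 1 := by exact_mod_cast hhi
    omega
  simp [this]

/-- Since `f` crosses the levels `kπ` only upwards, it meets each level `kπ < f a` with `k ≥ 1`
exactly once on `(0, a)` and no other level. -/
lemma ncard_sin_eq_zero_Ioo {f : ℝ → ℝ} {a : ℝ} (ha : 0 ≤ a) (hf : ContinuousOn f (Icc 0 a))
    (hf₀ : f 0 = 0)
    (hup : ∀ x ∈ Icc 0 a, sin (f x) = 0 → ∃ f' > 0, HasDerivWithinAt f f' (Icc 0 a) x) :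
    {x ∈ Ioo 0 a | sin (f x) = 0}.ncard = {k : ℕ | 0 < k ∧ k * π < f a}.ncard := by
  have hcross : ∀ x₁ ∈ Icc 0 a, ∀ x₂ ∈ Icc 0 a, x₁ < x₂ → sin (f x₁) = 0 → f x₁ < f x₂ :=
    fun x₁ hx₁ x₂ hx₂ hlt hsin ↦ hf.lt_of_le_of_hasDerivWithinAt_pos
      (fun x hx hfx ↦ hup x hx (hfx ▸ hsin)) hx₁ hx₂ hlt le_rfl
  have hmem : ∀ x ∈ Ioo 0 a, x ∈ Icc 0 a := fun x hx ↦ Ioo_subset_Icc_self hx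
  have hpos : ∀ x ∈ Ioo 0 a, 0 < f x := fun x hx ↦
    hf₀ ▸ hcross 0 (left_mem_Icc.mpr ha) x (hmem x hx) hx.1 (by simp [hf₀])
  refine ncard_congr (fun x _ ↦ ⌊f x / π⌋₊) ?_ ?_ ?_
  · rintro x ⟨hx, hsin⟩
    have hfx := natFloor_div_pi_mul_pi hsin (hpos x hx).le
    refine ⟨Nat.pos_of_ne_zero fun h₀ ↦ (hpos x hx).ne ?_, ?_⟩
    · simpa [h₀] using hfx
    · rw [hfx]
      exact hcross x (hmem x hx) a (right_mem_Icc.mpr ha) hx.2 hsin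
  · rintro x y ⟨hx, hsinx⟩ ⟨hy, hsiny⟩ hxy
    have hfxy : f x = f y := by
      rw [← natFloor_div_pi_mul_pi hsinx (hpos x hx).le,
        ← natFloor_div_pi_mul_pi hsiny (hpos y hy).le, hxy]
    by_contra hne
    rcases lt_or_gt_of_ne hne with hlt | hlt
    · exact (hcross x (hmem x hx) y (hmem y hy) hlt hsinx).ne hfxy
    · exact (hcross y (hmem y hy) x (hmem x hx) hlt hsiny).ne' hfxy
  · rintro k ⟨hk, hka⟩
    have hk0 : 0 < (k : ℝ) * π := by positivity
    obtain ⟨x, hx, hfx⟩ := intermediate_value_Icc ha hf ⟨by rw [hf₀]; exact hk0.le, hka.le⟩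
    have hx' : x ∈ Ioo 0 a :=
      ⟨hx.1.lt_of_ne (by rintro rfl; linarith), hx.2.lt_of_ne (by rintro rfl; linarith)⟩
    exact ⟨x, ⟨hx', by simp [hfx]⟩, by simp [hfx, pi_ne_zero]⟩

theorem prufer_angle_range (a : ℝ) (ha : 0 < a) (u : ℝ → ℝ) (hu : ContDiff ℝ 2 u)
    (θ : ℝ → ℝ) (hθc : ContinuousOn θ (Icc 0 a)) (hθ0 : θ 0 = 0)
    (hr : ∀ x ∈ Icc 0 a, 0 < Real.sqrt ((u x) ^ 2 + (deriv u x) ^ 2))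
    (hcos : ∀ x ∈ Icc 0 a,
      deriv u x = Real.sqrt ((u x) ^ 2 + (deriv u x) ^ 2) * Real.cos (θ x))
    (hsin : ∀ x ∈ Icc 0 a,
      u x = Real.sqrt ((u x) ^ 2 + (deriv u x) ^ 2) * Real.sin (θ x))
    (m : ℕ) (hm : {x ∈ Ioo 0 a | u x = 0}.Finite ∧ {x ∈ Ioo 0 a | u x = 0}.ncard = m) :
    θ a ∈ Ioc (m * π) ((m + 1) * π) ∧ (θ a = (m + 1) * π ↔ u a = 0) := by
  have hzero : ∀ x ∈ Icc 0 a, u x = 0 ↔ sin (θ x) = 0 := fun x hx ↦ by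
    rw [hsin x hx, mul_eq_zero, or_iff_right (hr x hx).ne']
  have hu' : Differentiable ℝ (deriv u) := (ContDiff.deriv' (n := 1) hu).differentiable one_ne_zero
  have hup : ∀ x ∈ Icc 0 a, sin (θ x) = 0 → ∃ θ' > 0, HasDerivWithinAt θ θ' (Icc 0 a) x := by
    intro x hx hsinx
    have hux : u x = 0 := (hzero x hx).mpr hsinx
    have hu'x : deriv u x ≠ 0 := fun h ↦ by simpa [hux, h] using hr x hx
    refine ⟨1, one_pos, ?_⟩
    have hpar : ∀ᶠ y in 𝓝[Icc 0 a] x, u y * cos (θ y) = deriv u y * sin (θ y) :=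
      eventually_mem_nhdsWithin.mono fun y hy ↦ by
        linear_combination cos (θ y) * hsin y hy - sin (θ y) * hcos y hy
    simpa [hu'x] using hasDerivWithinAt_angle_of_sin_eq_zero
      (hu.differentiable two_ne_zero x).hasDerivAt (hu' x).hasDerivAt (hθc x hx) hpar
      hux hu'x hsinx
  have hθa : 0 < θ a := hθc.lt_of_le_of_hasDerivWithinAt_pos
    (fun x hx hθx ↦ hup x hx (by simp [hθx])) (left_mem_Icc.mpr ha.le) (right_mem_Icc.mpr ha.le)
    ha hθ0.ge
  have hcount : {x ∈ Ioo 0 a | u x = 0} = {x ∈ Ioo 0 a | sin (θ x) = 0} :=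
    sep_ext_iff.mpr fun x hx ↦ hzero x (Ioo_subset_Icc_self hx)
  have hrange : θ a ∈ Ioc (m * π) ((m + 1) * π) := by
    refine mem_Ioc_of_ceil_div_pi hθa ?_
    rw [← ncard_nat_mul_pi_lt, ← ncard_sin_eq_zero_Ioo ha.le hθc hθ0 hup, ← hcount, hm.2]
  exact ⟨hrange, by rw [hzero a (right_mem_Icc.mpr ha.le), sin_eq_zero_iff_of_mem_Ioc hrange]⟩
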